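/- Let N ≥ 2, let f_n > 0 for all n ∈ {1,…,N}, let λ > 0, ρ > 0 and α > 0, set H = Σ_{i=1}^N 1/f_i, T_n = ((N−1)/(λ·ρ·H))·(1 − (N−1)/(f_n·H)) and T = Σ_{n=1}^N T_n = (N−1)/(λ·ρ·H). Assume f_n·H > N−1 for every n and α·T > 1, and set η* = α − 1/T and q*_n = T_n·η*. Then the pair (η*, (q*_1,…,q*_N)) is a Stackelberg–Nash equilibrium of the two upper levels of the game: (i) for every n and every q ≥ 0, η*·q*_n/(q*_n + Σ_{i≠n} q*_i) − (λ·ρ/f_n)·q*_n ≥ η*·q/(q + Σ_{i≠n} q*_i) − (λ·ρ/f_n)·q, i.e. (q*_1,…,q*_N) is a Nash equilibrium of the data owners' sub-game given η*; and (ii) for every η ≥ 0, α·log(1 + T·η*) − η* ≥ α·log(1 + T·η) − η, i.e. η* maximizes the model owner's utility given that the data owners respond with contributions T_n·η. -/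

import Mathlib

/-!
The data owners play a Tullock contest: against rivals of total `S`, with prize `η` and marginal
cost `c`, the payoff `η x / (x + S) - c x` is concave in `x ≥ 0` with critical point `x` where
`(x + S)² = η S / c`. The profile `q*_n = T_n η` makes this hold for every owner simultaneously,
because the closed form of `T_n` gives `λ ρ / f_n = (T - T_n) / T²`. The leader's utility
`α log (1 + T η) - η` is concave with critical point `η* = α - 1/T`, and the tangent-line bound
`log y ≤ y - 1` at `y = (1 + T η) / (1 + T η*)` shows it is a global maximum.
-/

open Finset

theorem tullock_payoff_le_at_best_response {η S x A : ℝ} (hη : 0 ≤ η) (hS : 0 < S)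
    (hx : 0 ≤ x) (hA : A ≠ 0) :
    η * x / (x + S) - η * S / A ^ 2 * x ≤ η * (A - S) / A - η * S / A ^ 2 * (A - S) := by
  have hxS : x + S ≠ 0 := by positivity
  have key : η * (A - S) / A - η * S / A ^ 2 * (A - S) - (η * x / (x + S) - η * S / A ^ 2 * x) =
      η * S * ((A - S) - x) ^ 2 / (A ^ 2 * (x + S)) := by
    field_simp
    ring
  have : 0 ≤ η * S * ((A - S) - x) ^ 2 / (A ^ 2 * (x + S)) := by positivity
  linarith

theorem tullock_payoff_le_at_proportional_profile {ι : Type*} [Fintype ι] [DecidableEq ι] {T : ι → ℝ} {η c x : ℝ}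
    {n : ι} (hη : 0 < η) (hT : 0 < ∑ i, T i) (hgap : 0 < ∑ i, T i - T n)
    (hc : c = (∑ i, T i - T n) / (∑ i, T i) ^ 2) (hx : 0 ≤ x) :
    η * x / (x + ∑ i ∈ univ.erase n, T i * η) - c * x ≤
      η * (T n * η) / (T n * η + ∑ i ∈ univ.erase n, T i * η) - c * (T n * η) := by
  set A := (∑ i, T i) * η
  set S := (∑ i, T i - T n) * η
  have hrivals : ∑ i ∈ univ.erase n, T i * η = S := by
    rw [← sum_mul, sum_erase_eq_sub (mem_univ n)]
  have hown : T n * η = A - S := by ring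
  have hcost : c = η * S / A ^ 2 := by
    rw [hc]
    field_simp [A, S]
    ring
  rw [hrivals, hown, hcost, sub_add_cancel]
  exact tullock_payoff_le_at_best_response hη.le (by positivity) hx (by positivity)

theorem mul_log_one_add_mul_sub_le {α T η : ℝ} (hα : 0 < α) (hT : 0 < T) (hη : 0 < 1 + T * η) :
    α * Real.log (1 + T * η) - η ≤ α * Real.log (1 + T * (α - 1 / T)) - (α - 1 / T) := by
  have hopt : 1 + T * (α - 1 / T) = α * T := by
    field_simp
    ring
  have htangent := Real.log_le_sub_one_of_pos (div_pos hη (mul_pos hα hT))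
  rw [Real.log_div hη.ne' (by positivity), ← hopt] at htangent
  have hratio : (1 + T * η) / (1 + T * (α - 1 / T)) - 1 = (η - (α - 1 / T)) / α := by
    rw [hopt]
    field_simp
    ring
  rw [hratio, le_div_iff₀ hα] at htangent
  linarith

theorem sum_one_sub_div_mul_sum_inv {ι : Type*} [Fintype ι] (f : ι → ℝ) (k : ℝ)
    (hH : ∑ i, 1 / f i ≠ 0) :
    ∑ n, (1 - k / (f n * ∑ i, 1 / f i)) = Fintype.card ι - k := by
  have hterm : ∀ n, k / (f n * ∑ i, 1 / f i) = k / (∑ i, 1 / f i) * (1 / f n) := fun n => by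
    ring
  simp only [sum_sub_distrib, hterm, ← mul_sum, sum_const, card_univ, nsmul_eq_mul, mul_one]
  field_simp

theorem stackelberg_nash_equilibrium_general (N : ℕ) (hN : 2 ≤ N) (f : Fin N → ℝ)
    (hf : ∀ n, 0 < f n) (lam ρ α : ℝ) (hlam : 0 < lam) (hρ : 0 < ρ) (hα : 0 < α)
    (T : Fin N → ℝ)
    (hT : ∀ n, T n = (((N : ℝ) - 1) / (lam * ρ * ∑ i, 1 / f i)) *
      (1 - ((N : ℝ) - 1) / (f n * ∑ i, 1 / f i)))
    (Tt : ℝ) (hTt : Tt = ∑ n, T n)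
    (hαT : 1 < α * Tt)
    (ηs : ℝ) (hηs : ηs = α - 1 / Tt)
    (q : Fin N → ℝ) (hq : ∀ n, q n = T n * ηs) :
    (∀ n, ∀ x : ℝ, 0 ≤ x →
      ηs * x / (x + ∑ i ∈ Finset.univ.erase n, q i) - lam * ρ / f n * x ≤
      ηs * q n / (q n + ∑ i ∈ Finset.univ.erase n, q i) - lam * ρ / f n * q n) ∧
    (∀ η : ℝ, 0 ≤ η →
      α * Real.log (1 + Tt * η) - η ≤ α * Real.log (1 + Tt * ηs) - ηs) := by
  set H := ∑ i, 1 / f i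
  have hH : 0 < H := sum_pos (fun i _ => one_div_pos.mpr (hf i)) ⟨⟨0, by omega⟩, mem_univ _⟩
  have hN1 : (0 : ℝ) < N - 1 := by
    have : (2 : ℝ) ≤ N := by exact_mod_cast hN
    linarith
  have hTt_eq : Tt = (N - 1) / (lam * ρ * H) := by
    rw [hTt, Fintype.sum_congr _ _ hT, ← mul_sum, sum_one_sub_div_mul_sum_inv f _ hH.ne',
      Fintype.card_fin, sub_sub_cancel, mul_one]
  have hTt_pos : 0 < Tt := by rw [hTt_eq]; positivity
  have hgap : ∀ n, Tt - T n = Tt * ((N - 1) / (f n * H)) := fun n => by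
    rw [hT n, ← hTt_eq]
    ring
  refine ⟨fun n x hx => ?_, fun η hη => ?_⟩
  · obtain rfl : q = fun i => T i * ηs := funext hq
    have hηs_pos : 0 < ηs := by
      rw [hηs, sub_pos, div_lt_iff₀ hTt_pos]
      linarith
    have hf_n := hf n
    refine tullock_payoff_le_at_proportional_profile hηs_pos (hTt ▸ hTt_pos) ?_ ?_ hx
    · rw [← hTt, hgap n]
      positivity
    · rw [← hTt, hgap n, hTt_eq]
      field_simp
  · rw [hηs]
    exact mul_log_one_add_mul_sub_le hα hTt_pos (by positivity)

/-- with `T_n` the data owners' response coefficients,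
`T = Σ T_n`, `η* = α − 1/T` and `q*_n = T_n·η*`, the pair `(η*, q*)` is a
Stackelberg–Nash equilibrium: (i) `q*` is a Nash equilibrium of the data owners'
sub-game given `η*`, and (ii) `η*` maximizes the model owner's utility
`α·log(1 + T·η) − η` over `η ≥ 0`. -/
theorem stackelberg_nash_equilibrium (N : ℕ) (hN : 2 ≤ N) (f : Fin N → ℝ)
    (hf : ∀ n, 0 < f n) (lam ρ α : ℝ) (hlam : 0 < lam) (hρ : 0 < ρ) (hα : 0 < α)
    (T : Fin N → ℝ)
    (hT : ∀ n, T n = (((N : ℝ) - 1) / (lam * ρ * ∑ i, 1 / f i)) *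
      (1 - ((N : ℝ) - 1) / (f n * ∑ i, 1 / f i)))
    (Tt : ℝ) (hTt : Tt = ∑ n, T n)
    (hpos : ∀ n, ((N : ℝ) - 1) < f n * ∑ i, 1 / f i)
    (hαT : 1 < α * Tt)
    (ηs : ℝ) (hηs : ηs = α - 1 / Tt)
    (q : Fin N → ℝ) (hq : ∀ n, q n = T n * ηs) :
    (∀ n, ∀ x : ℝ, 0 ≤ x →
      ηs * x / (x + ∑ i ∈ Finset.univ.erase n, q i) - lam * ρ / f n * x ≤
      ηs * q n / (q n + ∑ i ∈ Finset.univ.erase n, q i) - lam * ρ / f n * q n) ∧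
    (∀ η : ℝ, 0 ≤ η →
      α * Real.log (1 + Tt * η) - η ≤ α * Real.log (1 + Tt * ηs) - ηs) :=
  stackelberg_nash_equilibrium_general N hN f hf lam ρ α hlam hρ hα T hT Tt hTt hαT ηs hηs q hq
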